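/- Let τ = e^{2πi/3} and let D = diag(τ, conj(τ)) ∈ M₂(ℂ). Suppose h₁, h₂ ∈ M₂(ℂ) are Hermitian matrices satisfying D h₁ D* = −h₁ − h₂ and D h₂ D* = h₁. Then there exists α ∈ ℂ such that h₁ = [[0, α],[conj(α), 0]] and h₂ = [[0, τα],[conj(τ)conj(α), 0]]. -/
import Mathlib


open Matrix ComplexConjugate

noncomputable def tau : ℂ := Complex.exp (2 * (Real.pi : ℂ) * Complex.I / 3)

noncomputable def D : Matrix (Fin 2) (Fin 2) ℂ := !![tau, 0; 0, conj tau]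

lemma tau_eq : tau = Complex.exp (((2 * Real.pi / 3 : ℝ) : ℂ) * Complex.I) := by
  rw [tau]; congr 1; push_cast; ring

lemma tau_cube : tau ^ 3 = 1 := by
  rw [tau, ← Complex.exp_nat_mul]
  rw [show (3:ℕ) * (2 * (Real.pi : ℂ) * Complex.I / 3) = 2 * Real.pi * Complex.I by push_cast; ring]
  exact Complex.exp_two_pi_mul_I

lemma tau_ne_one : tau ≠ 1 := by
  intro h
  have him : tau.im = Real.sin (2 * Real.pi / 3) := by
    rw [tau_eq, Complex.exp_ofReal_mul_I_im]
  rw [h] at him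
  have hpos : 0 < Real.sin (2 * Real.pi / 3) :=
    Real.sin_pos_of_pos_of_lt_pi (by positivity) (by linarith [Real.pi_pos])
  simp at him
  linarith

lemma tau_ne_zero : tau ≠ 0 := by
  intro h0
  have := tau_cube
  rw [h0] at this; norm_num at this

lemma tau_sum : 1 + tau + tau ^ 2 = 0 := by
  have h2 : (tau - 1) * (1 + tau + tau ^ 2) = 0 := by linear_combination tau_cube
  rcases mul_eq_zero.mp h2 with h' | h'
  · exact absurd h' (sub_ne_zero.mpr tau_ne_one)
  · exact h'

lemma conj_tau_mul : conj tau * tau = 1 := by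
  rw [tau_eq, ← Complex.exp_conj, ← Complex.exp_add]
  rw [show conj (((2 * Real.pi / 3 : ℝ) : ℂ) * Complex.I) = -(((2 * Real.pi / 3 : ℝ) : ℂ) * Complex.I) by
    simp [Complex.conj_I, Complex.conj_ofReal, map_ofNat, map_div₀]]
  rw [neg_add_cancel, Complex.exp_zero]

lemma conj_tau : conj tau = tau ^ 2 := by
  have h : conj tau * tau = tau ^ 2 * tau := by
    rw [conj_tau_mul]; linear_combination - tau_cube
  exact mul_right_cancel₀ tau_ne_zero h

/-- Structure of the first-order derivative matrices of a rotation-symmetric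
Bloch Hamiltonian at the Dirac point. -/
theorem stmt2 (h₁ h₂ : Matrix (Fin 2) (Fin 2) ℂ)
    (hh₁ : h₁.IsHermitian) (hh₂ : h₂.IsHermitian)
    (hr1 : D * h₁ * Dᴴ = -h₁ - h₂)
    (hr2 : D * h₂ * Dᴴ = h₁) :
    ∃ α : ℂ, h₁ = !![0, α; conj α, 0] ∧
      h₂ = !![0, tau * α; conj tau * conj α, 0] := by
  have t1 := congrFun (congrFun hr1 0) 0
  have t2 := congrFun (congrFun hr1 1) 1
  have t3 := congrFun (congrFun hr2 0) 0
  have t4 := congrFun (congrFun hr2 1) 1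
  have t5 := congrFun (congrFun hr2 0) 1
  simp [D, Matrix.mul_apply, Matrix.vecMul, dotProduct, Fin.sum_univ_two] at t1 t2 t3 t4 t5
  have a1 := congrFun (congrFun hh₁ 1) 0
  have a2 := congrFun (congrFun hh₂ 1) 0
  simp [Matrix.conjTranspose_apply] at a1 a2
  rw [conj_tau] at t1 t2 t3 t4
  have hc := tau_cube
  have hs := tau_sum
  have t1' : h₁ 0 0 = -h₁ 0 0 - h₂ 0 0 := by linear_combination t1 - h₁ 0 0 * hc
  have t3' : h₂ 0 0 = h₁ 0 0 := by linear_combination t3 - h₂ 0 0 * hc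
  have t2' : h₁ 1 1 = -h₁ 1 1 - h₂ 1 1 := by linear_combination t2 - h₁ 1 1 * hc
  have t4' : h₂ 1 1 = h₁ 1 1 := by linear_combination t4 - h₂ 1 1 * hc
  have d1 : h₁ 0 0 = 0 := by linear_combination (t1' - t3') / 3
  have d2 : h₂ 0 0 = 0 := by linear_combination t3' + d1
  have d3 : h₁ 1 1 = 0 := by linear_combination (t2' - t4') / 3
  have d4 : h₂ 1 1 = 0 := by linear_combination t4' + d3
  have q : h₂ 0 1 = tau * h₁ 0 1 := by linear_combination tau * t5 - h₂ 0 1 * hc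
  refine ⟨h₁ 0 1, ?_, ?_⟩ <;> ext i j <;> fin_cases i <;> fin_cases j <;>
    simp [d1, d2, d3, d4, q, ← a1, ← a2, conj_tau, mul_comm]
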